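/- arXiv:1701.08305 — 10 statements merged into one kernel-verified Lean document; each statement's English description precedes it below -/
import Mathlib

section
/- Let d be a pseudometric on a type α, let Σ¹,…,Σ^C (C ≥ 1) be nonempty finite subsets of α with positive weights λ₁,…,λ_C, let λ* = max_k λ_k and M = {k : λ_k = λ*}. Fix any ρ ∈ α and set W = max_k λ_k·d_med(ρ, Σ^k). Then the average, over all σ drawn from the disjoint (multiplicity-counted) union ⋃_{k∈M} Σ^k, of the objective max_j λ_j·d_med(σ, Σ^j) is at most 2W; that is, (1/∑_{k∈M}|Σ^k|)·∑_{k∈M}∑_{σ∈Σ^k} max_j λ_j·d_med(σ, Σ^j) ≤ 2W. -/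
/-!
For any `σ` and any class `j`, the triangle inequality through `ρ` gives
`λ_j · d_med(σ, Σ^j) ≤ λ* · d(σ, ρ) + W`. Averaging over `σ ∈ Σ^k` with `λ_k = λ*` turns the
first term into `λ_k · d_med(ρ, Σ^k) ≤ W`, so the objective averages to at most `2W` on every
maximal-weight class, hence on their union.
-/

/-- The median distance between a point `π` and a finite set `T` of points:
`(1/|T|) · ∑_{σ ∈ T} d(π, σ)`. -/
noncomputable def medDist {α : Type*} (d : α → α → ℝ) (π : α) (T : Finset α) : ℝ :=
  (1 / (T.card : ℝ)) * ∑ σ ∈ T, d π σ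

open Finset

section MedDist

variable {α : Type*} (d : α → α → ℝ)

/-- Holds also for `T = ∅`, where `medDist` is `0` by the convention `1 / 0 = 0`. -/
theorem card_mul_medDist (π : α) (T : Finset α) :
    (#T : ℝ) * medDist d π T = ∑ σ ∈ T, d π σ := by
  rcases T.eq_empty_or_nonempty with rfl | hT
  · simp
  · have : (#T : ℝ) ≠ 0 := by exact_mod_cast hT.card_pos.ne'
    rw [medDist, ← mul_assoc, mul_one_div_cancel this, one_mul]

variable {d}

theorem medDist_nonneg (hd_nonneg : ∀ x y, 0 ≤ d x y) (π : α) (T : Finset α) :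
    0 ≤ medDist d π T :=
  mul_nonneg (by positivity) (sum_nonneg fun _ _ => hd_nonneg _ _)

theorem medDist_le_dist_add_medDist (hd_nonneg : ∀ x y, 0 ≤ d x y)
    (hd_tri : ∀ x y z, d x z ≤ d x y + d y z) (σ ρ : α) (T : Finset α) :
    medDist d σ T ≤ d σ ρ + medDist d ρ T := by
  have hsum : ∑ τ ∈ T, d σ τ ≤ #T * d σ ρ + ∑ τ ∈ T, d ρ τ := by
    rw [← nsmul_eq_mul, ← sum_const, ← sum_add_distrib]
    exact sum_le_sum fun τ _ => hd_tri σ ρ τ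
  have hcard : 1 / (#T : ℝ) * #T ≤ 1 := by
    rcases T.eq_empty_or_nonempty with rfl | hT
    · simp
    · rw [one_div_mul_cancel (by exact_mod_cast hT.card_pos.ne')]
  calc medDist d σ T ≤ 1 / (#T : ℝ) * (#T * d σ ρ + ∑ τ ∈ T, d ρ τ) :=
        mul_le_mul_of_nonneg_left hsum (by positivity)
    _ = 1 / (#T : ℝ) * #T * d σ ρ + medDist d ρ T := by rw [medDist]; ring
    _ ≤ d σ ρ + medDist d ρ T := by
        gcongr
        exact mul_le_of_le_one_left (hd_nonneg σ ρ) hcard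

theorem sup'_mul_medDist_le {ι : Type*} (hd_nonneg : ∀ x y, 0 ≤ d x y)
    (hd_tri : ∀ x y z, d x z ≤ d x y + d y z) {s : Finset ι} (hs : s.Nonempty)
    (S : ι → Finset α) {lam : ι → ℝ} {lamStar W : ℝ} (hlam : ∀ j ∈ s, 0 ≤ lam j)
    (hlamStar : ∀ j ∈ s, lam j ≤ lamStar) {ρ : α}
    (hW : ∀ j ∈ s, lam j * medDist d ρ (S j) ≤ W) (σ : α) :
    s.sup' hs (fun j => lam j * medDist d σ (S j)) ≤ lamStar * d σ ρ + W := by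
  refine sup'_le hs _ fun j hj => ?_
  calc lam j * medDist d σ (S j) ≤ lam j * (d σ ρ + medDist d ρ (S j)) :=
        mul_le_mul_of_nonneg_left (medDist_le_dist_add_medDist hd_nonneg hd_tri σ ρ _)
          (hlam j hj)
    _ = lam j * d σ ρ + lam j * medDist d ρ (S j) := mul_add _ _ _
    _ ≤ lamStar * d σ ρ + W := by
        gcongr
        · exact hd_nonneg σ ρ
        · exact hlamStar j hj
        · exact hW j hj

theorem sum_mul_dist_add_le (hd_symm : ∀ x y, d x y = d y x) {T : Finset α} {c W : ℝ}
    {ρ : α} (hW : c * medDist d ρ T ≤ W) :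
    ∑ σ ∈ T, (c * d σ ρ + W) ≤ #T * (2 * W) := by
  have hsum : ∑ σ ∈ T, c * d σ ρ = #T * (c * medDist d ρ T) := by
    rw [← mul_sum, mul_left_comm, card_mul_medDist]
    simp_rw [hd_symm _ ρ]
  rw [sum_add_distrib, hsum, sum_const, nsmul_eq_mul]
  linarith [mul_le_mul_of_nonneg_left hW (Nat.cast_nonneg (α := ℝ) (#T))]

end MedDist

theorem avg_pick_rnd_perm_le_two_W_general {α : Type*} (d : α → α → ℝ)
    (hd_symm : ∀ x y, d x y = d y x)
    (hd_nonneg : ∀ x y, 0 ≤ d x y)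
    (hd_tri : ∀ x y z, d x z ≤ d x y + d y z)
    {C : ℕ} (hC : 0 < C)
    (S : Fin C → Finset α)
    (lam : Fin C → ℝ) (hlam : ∀ k, 0 < lam k)
    (lamStar : ℝ)
    (hlamStar : lamStar = Finset.univ.sup' ⟨⟨0, hC⟩, Finset.mem_univ _⟩ lam)
    (M : Finset (Fin C)) (hM : M = Finset.univ.filter (fun k => lam k = lamStar))
    (ρ : α) (W : ℝ)
    (hW : W = Finset.univ.sup' ⟨⟨0, hC⟩, Finset.mem_univ _⟩
      (fun k => lam k * medDist d ρ (S k))) :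
    (1 / (∑ k ∈ M, ((S k).card : ℝ))) *
      ∑ k ∈ M, ∑ σ ∈ S k,
        Finset.univ.sup' ⟨⟨0, hC⟩, Finset.mem_univ _⟩
          (fun j => lam j * medDist d σ (S j)) ≤ 2 * W := by
  have hlamStar_ge (j) (_ : j ∈ univ) : lam j ≤ lamStar := hlamStar ▸ le_sup' lam (mem_univ j)
  have hW_ge (j) (_ : j ∈ univ) : lam j * medDist d ρ (S j) ≤ W :=
    hW ▸ le_sup' (fun k => lam k * medDist d ρ (S k)) (mem_univ j)
  have hW_nonneg : 0 ≤ W :=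
    (mul_nonneg (hlam _).le (medDist_nonneg hd_nonneg _ _)).trans (hW_ge ⟨0, hC⟩ (mem_univ _))
  rw [one_div_mul_eq_div]
  refine div_le_of_le_mul₀ (by positivity) (by positivity) ?_
  rw [mul_sum]
  refine sum_le_sum fun k hk => ?_
  have hk_max : lam k = lamStar := by simpa [hM] using hk
  calc _ ≤ ∑ σ ∈ S k, (lamStar * d σ ρ + W) := sum_le_sum fun σ _ =>
          sup'_mul_medDist_le hd_nonneg hd_tri _ S (fun j _ => (hlam j).le) hlamStar_ge hW_ge σ
    _ ≤ #(S k) * (2 * W) := sum_mul_dist_add_le hd_symm (hk_max ▸ hW_ge k (mem_univ k))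
    _ = 2 * W * #(S k) := mul_comm _ _

/-- The Pick-Rnd-Perm guarantee: the average, over all `σ` in the
multiplicity-counted union of the classes of maximal weight, of the objective
`max_j λ_j · d_med(σ, Σ^j)` is at most `2W`. -/
theorem avg_pick_rnd_perm_le_two_W {α : Type*} (d : α → α → ℝ)
    (hd_self : ∀ x, d x x = 0)
    (hd_symm : ∀ x y, d x y = d y x)
    (hd_nonneg : ∀ x y, 0 ≤ d x y)
    (hd_tri : ∀ x y z, d x z ≤ d x y + d y z)
    {C : ℕ} (hC : 0 < C)
    (S : Fin C → Finset α) (hS : ∀ k, (S k).Nonempty)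
    (lam : Fin C → ℝ) (hlam : ∀ k, 0 < lam k)
    (lamStar : ℝ)
    (hlamStar : lamStar = Finset.univ.sup' ⟨⟨0, hC⟩, Finset.mem_univ _⟩ lam)
    (M : Finset (Fin C)) (hM : M = Finset.univ.filter (fun k => lam k = lamStar))
    (ρ : α) (W : ℝ)
    (hW : W = Finset.univ.sup' ⟨⟨0, hC⟩, Finset.mem_univ _⟩
      (fun k => lam k * medDist d ρ (S k))) :
    (1 / (∑ k ∈ M, ((S k).card : ℝ))) *
      ∑ k ∈ M, ∑ σ ∈ S k,
        Finset.univ.sup' ⟨⟨0, hC⟩, Finset.mem_univ _⟩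
          (fun j => lam j * medDist d σ (S j)) ≤ 2 * W :=
  avg_pick_rnd_perm_le_two_W_general d hd_symm hd_nonneg hd_tri hC S lam hlam lamStar hlamStar M hM
    ρ W hW
end

section
/- Let d be a pseudometric on a type α, let Σ¹,…,Σ^C (C ≥ 1) be nonempty finite subsets of α with positive weights λ₁,…,λ_C, let λ* = max_k λ_k and M = {k : λ_k = λ*}. Fix any ρ ∈ α and set W = max_k λ_k·d_med(ρ, Σ^k). Then there exist k ∈ M and σ ∈ Σ^k such that max_j λ_j·d_med(σ, Σ^j) ≤ 2W. -/
section MedDist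

variable {α : Type*} {d : α → α → ℝ} {T : Finset α}

lemma exists_mem_le_medDist (hT : T.Nonempty) (ρ : α) : ∃ σ ∈ T, d ρ σ ≤ medDist d ρ T := by
  have hcard : (T.card : ℝ) ≠ 0 := by exact_mod_cast hT.card_pos.ne'
  refine T.exists_le_of_sum_le hT ?_
  rw [Finset.sum_const, nsmul_eq_mul, medDist, ← mul_assoc, mul_one_div_cancel hcard, one_mul]

lemma medDist_le_add_medDist (hd_tri : ∀ x y z, d x z ≤ d x y + d y z) (hT : T.Nonempty)
    (σ ρ : α) : medDist d σ T ≤ d σ ρ + medDist d ρ T := by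
  have hcard : (T.card : ℝ) ≠ 0 := by exact_mod_cast hT.card_pos.ne'
  have hsum : ∑ τ ∈ T, d σ τ ≤ T.card * d σ ρ + ∑ τ ∈ T, d ρ τ := by
    rw [← nsmul_eq_mul, ← Finset.sum_const, ← Finset.sum_add_distrib]
    exact Finset.sum_le_sum fun τ _ => hd_tri σ ρ τ
  calc medDist d σ T ≤ 1 / T.card * (T.card * d σ ρ + ∑ τ ∈ T, d ρ τ) :=
        mul_le_mul_of_nonneg_left hsum (by positivity)
    _ = d σ ρ + medDist d ρ T := by
        rw [medDist, mul_add, ← mul_assoc, one_div_mul_cancel hcard, one_mul]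

end MedDist

theorem exists_pick_perm_le_two_W_general {α : Type*} (d : α → α → ℝ)
    (hd_symm : ∀ x y, d x y = d y x)
    (hd_nonneg : ∀ x y, 0 ≤ d x y)
    (hd_tri : ∀ x y z, d x z ≤ d x y + d y z)
    {C : ℕ} (hC : 0 < C)
    (S : Fin C → Finset α) (hS : ∀ k, (S k).Nonempty)
    (lam : Fin C → ℝ) (hlam : ∀ k, 0 < lam k)
    (lamStar : ℝ)
    (hlamStar : lamStar = Finset.univ.sup' ⟨⟨0, hC⟩, Finset.mem_univ _⟩ lam)
    (M : Finset (Fin C)) (hM : M = Finset.univ.filter (fun k => lam k = lamStar))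
    (ρ : α) (W : ℝ)
    (hW : W = Finset.univ.sup' ⟨⟨0, hC⟩, Finset.mem_univ _⟩
      (fun k => lam k * medDist d ρ (S k))) :
    ∃ k ∈ M, ∃ σ ∈ S k,
      Finset.univ.sup' ⟨⟨0, hC⟩, Finset.mem_univ _⟩
        (fun j => lam j * medDist d σ (S j)) ≤ 2 * W := by
  obtain ⟨k, -, hk⟩ := Finset.univ.exists_mem_eq_sup' ⟨⟨0, hC⟩, Finset.mem_univ _⟩ lam
  obtain ⟨σ, hσ, hσρ⟩ := exists_mem_le_medDist (d := d) (hS k) ρ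
  have hkM : k ∈ M := by simp [hM, hlamStar, hk]
  have hW_ge (j : Fin C) : lam j * medDist d ρ (S j) ≤ W :=
    hW ▸ Finset.le_sup' (fun j => lam j * medDist d ρ (S j)) (Finset.mem_univ j)
  refine ⟨k, hkM, σ, hσ, Finset.sup'_le _ _ fun j _ => ?_⟩
  have hlam_le : lam j ≤ lam k := hk ▸ Finset.le_sup' lam (Finset.mem_univ j)
  calc lam j * medDist d σ (S j)
      ≤ lam j * (d σ ρ + medDist d ρ (S j)) :=
        mul_le_mul_of_nonneg_left (medDist_le_add_medDist hd_tri (hS j) σ ρ) (hlam j).le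
    _ ≤ lam k * d ρ σ + lam j * medDist d ρ (S j) := by
        rw [mul_add, hd_symm σ ρ]
        gcongr
        exact hd_nonneg ρ σ
    _ ≤ lam k * medDist d ρ (S k) + W := by
        gcongr
        · exact (hlam k).le
        · exact hW_ge j
    _ ≤ 2 * W := by linarith [hW_ge k]

/-- There is a ranking in one of the maximal-weight classes whose minmax
median-distance objective is at most `2W`. -/
theorem exists_pick_perm_le_two_W {α : Type*} (d : α → α → ℝ)
    (hd_self : ∀ x, d x x = 0)
    (hd_symm : ∀ x y, d x y = d y x)
    (hd_nonneg : ∀ x y, 0 ≤ d x y)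
    (hd_tri : ∀ x y z, d x z ≤ d x y + d y z)
    {C : ℕ} (hC : 0 < C)
    (S : Fin C → Finset α) (hS : ∀ k, (S k).Nonempty)
    (lam : Fin C → ℝ) (hlam : ∀ k, 0 < lam k)
    (lamStar : ℝ)
    (hlamStar : lamStar = Finset.univ.sup' ⟨⟨0, hC⟩, Finset.mem_univ _⟩ lam)
    (M : Finset (Fin C)) (hM : M = Finset.univ.filter (fun k => lam k = lamStar))
    (ρ : α) (W : ℝ)
    (hW : W = Finset.univ.sup' ⟨⟨0, hC⟩, Finset.mem_univ _⟩
      (fun k => lam k * medDist d ρ (S k))) :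
    ∃ k ∈ M, ∃ σ ∈ S k,
      Finset.univ.sup' ⟨⟨0, hC⟩, Finset.mem_univ _⟩
        (fun j => lam j * medDist d σ (S j)) ≤ 2 * W :=
  exists_pick_perm_le_two_W_general d hd_symm hd_nonneg hd_tri hC S hS lam hlam lamStar hlamStar M
    hM ρ W hW
end

section
/- Let x, y, z be three distinct indices and let u, w, h be real-valued functions on ordered pairs of distinct indices from {x, y, z} satisfying: 0 ≤ u_{ab} ≤ 1 and u_{ab} + u_{ba} = 1 for all distinct a, b; u_{ab} + u_{bc} + u_{ca} ≥ 1 for all distinct a, b, c; w_{ab} ≥ 0 and w_{ab} + w_{bc} ≥ w_{ac} for all distinct a, b, c; h_{ab} ∈ {0,1}, h_{ab} + h_{ba} = 1, and h_{ab} = 1 implies u_{ab} ≥ 1/2, for all distinct a, b. Then ∑ h_{ac}·h_{cb}·w_{ba} ≤ 2·∑ h_{ac}·h_{cb}·(u_{ab}·w_{ba} + u_{ba}·w_{ab}), where both sums range over all six orderings (a, b, c) of the triple (x, y, z). -/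
/-!
The six orderings split into two rotation classes, and the 2-paths `a → c → b` charged by one
class are exactly the three 2-paths of the 3-cycle `a → c → b → a`. Since
`h_ac h_cb = h_ac h_cb h_ab + h_ac h_cb h_ba`, each term of a class is either transitive, where
`h_ab = 1` forces `u_ab ≥ 1/2` and the term is bounded on its own, or carries the cycle indicator
`h_ac h_cb h_ba` common to the whole class. On a rounded 3-cycle the three terms are bounded
together: each forward weight is at most the sum of two backward ones by the triangle inequality,
and the reversed LP triangle constraint keeps the fractional weight on the cycle at most 2.
-/

section

variable {ι : Type*}

structure IsKendallLPFeasible (S : Set ι) (u : ι → ι → ℝ) : Prop where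
  bounds : ∀ a ∈ S, ∀ b ∈ S, a ≠ b → 0 ≤ u a b ∧ u a b ≤ 1
  add_swap : ∀ a ∈ S, ∀ b ∈ S, a ≠ b → u a b + u b a = 1
  triangle : ∀ a ∈ S, ∀ b ∈ S, ∀ c ∈ S, a ≠ b → b ≠ c → a ≠ c →
    1 ≤ u a b + u b c + u c a

structure IsTriangleWeight (S : Set ι) (w : ι → ι → ℝ) : Prop where
  nonneg : ∀ a ∈ S, ∀ b ∈ S, a ≠ b → 0 ≤ w a b
  triangle : ∀ a ∈ S, ∀ b ∈ S, ∀ c ∈ S, a ≠ b → b ≠ c → a ≠ c →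
    w a c ≤ w a b + w b c

structure IsHalfRounding (S : Set ι) (u h : ι → ι → ℝ) : Prop where
  zero_or_one : ∀ a ∈ S, ∀ b ∈ S, a ≠ b → h a b = 0 ∨ h a b = 1
  add_swap : ∀ a ∈ S, ∀ b ∈ S, a ≠ b → h a b + h b a = 1
  half_le : ∀ a ∈ S, ∀ b ∈ S, a ≠ b → h a b = 1 → 1 / 2 ≤ u a b

def roundedCost (h w : ι → ι → ℝ) (a b c : ι) : ℝ :=
  h a c * h c b * w b a

def fractionalCost (u h w : ι → ι → ℝ) (a b c : ι) : ℝ :=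
  h a c * h c b * (u a b * w b a + u b a * w a b)

/-- `2 * fractionalCost - roundedCost` of the orderings `(a, b, _)`, stripped of its `h`-factor. -/
def roundingSlack (u w : ι → ι → ℝ) (a b : ι) : ℝ :=
  2 * (u a b * w b a + u b a * w a b) - w b a

variable {S : Set ι} {u w h : ι → ι → ℝ} {a b c : ι}

theorem roundingSlack_nonneg (hab : 1 / 2 ≤ u a b) (hba : 0 ≤ u b a) (wab : 0 ≤ w a b)
    (wba : 0 ≤ w b a) : 0 ≤ roundingSlack u w a b := by
  unfold roundingSlack
  linarith [mul_nonneg (by linarith : (0 : ℝ) ≤ 2 * u a b - 1) wba, mul_nonneg hba wab]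

theorem IsKendallLPFeasible.add_roundingSlack_nonneg_of_cycle (hu : IsKendallLPFeasible S u)
    (hw : IsTriangleWeight S w) (ha : a ∈ S) (hb : b ∈ S) (hc : c ∈ S)
    (hab : a ≠ b) (hbc : b ≠ c) (hac : a ≠ c)
    (uab_half : 1 / 2 ≤ u a b) (ubc_half : 1 / 2 ≤ u b c) (uca_half : 1 / 2 ≤ u c a) :
    0 ≤ roundingSlack u w b a + roundingSlack u w c b + roundingSlack u w a c := by
  have hba := hab.symm
  have hcb := hbc.symm
  have hca := hac.symm
  have cycle_le_two : u a b + u b c + u c a ≤ 2 := by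
    linarith [hu.triangle a ha c hc b hb hac hcb hab, hu.add_swap a ha b hb hab,
      hu.add_swap b hb c hc hbc, hu.add_swap c hc a ha hca]
  have tri_ab : 0 ≤ w a c + w c b - w a b := by linarith [hw.triangle a ha c hc b hb hac hcb hab]
  have tri_bc : 0 ≤ w b a + w a c - w b c := by linarith [hw.triangle b hb a ha c hc hba hac hbc]
  have tri_ca : 0 ≤ w c b + w b a - w c a := by linarith [hw.triangle c hc b hb a ha hcb hba hca]
  have wba := hw.nonneg b hb a ha hba
  have wcb := hw.nonneg c hc b hb hcb
  have wac := hw.nonneg a ha c hc hac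
  unfold roundingSlack
  rw [show u b a = 1 - u a b by linarith [hu.add_swap a ha b hb hab],
    show u c b = 1 - u b c by linarith [hu.add_swap b hb c hc hbc],
    show u a c = 1 - u c a by linarith [hu.add_swap c hc a ha hca]]
  -- trade each forward weight for two backward ones at rate `2u - 1`; a backward weight is then
  -- left with a multiple of `(2 - (u a b + u b c + u c a)) + (2u - 1) ≥ 0`
  linarith [mul_nonneg (by linarith : (0 : ℝ) ≤ 2 * u a b - 1) tri_ab,
    mul_nonneg (by linarith : (0 : ℝ) ≤ 2 * u b c - 1) tri_bc,
    mul_nonneg (by linarith : (0 : ℝ) ≤ 2 * u c a - 1) tri_ca,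
    mul_nonneg (by linarith : (0 : ℝ) ≤ 1 + u a b - u b c - u c a) wba,
    mul_nonneg (by linarith : (0 : ℝ) ≤ 1 + u b c - u c a - u a b) wcb,
    mul_nonneg (by linarith : (0 : ℝ) ≤ 1 + u c a - u a b - u b c) wac]

namespace IsHalfRounding

theorem nonneg (hh : IsHalfRounding S u h) (ha : a ∈ S) (hb : b ∈ S) (hab : a ≠ b) :
    0 ≤ h a b := by
  rcases hh.zero_or_one a ha b hb hab with h0 | h1 <;> simp [*]

theorem mul_roundingSlack_nonneg (hh : IsHalfRounding S u h) (hu : IsKendallLPFeasible S u)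
    (hw : IsTriangleWeight S w) (ha : a ∈ S) (hb : b ∈ S) (hab : a ≠ b) :
    0 ≤ h a b * roundingSlack u w a b := by
  rcases hh.zero_or_one a ha b hb hab with h0 | h1
  · simp [h0]
  · rw [h1, one_mul]
    exact roundingSlack_nonneg (hh.half_le a ha b hb hab h1) (hu.bounds b hb a ha hab.symm).1
      (hw.nonneg a ha b hb hab) (hw.nonneg b hb a ha hab.symm)

theorem cycle_mul_roundingSlack_nonneg (hh : IsHalfRounding S u h) (hu : IsKendallLPFeasible S u)
    (hw : IsTriangleWeight S w) (ha : a ∈ S) (hb : b ∈ S) (hc : c ∈ S)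
    (hab : a ≠ b) (hbc : b ≠ c) (hac : a ≠ c) :
    0 ≤ h a b * h b c * h c a *
      (roundingSlack u w b a + roundingSlack u w c b + roundingSlack u w a c) := by
  rcases hh.zero_or_one a ha b hb hab with h0 | hab1
  · simp [h0]
  rcases hh.zero_or_one b hb c hc hbc with h0 | hbc1
  · simp [h0]
  rcases hh.zero_or_one c hc a ha hac.symm with h0 | hca1
  · simp [h0]
  rw [hab1, hbc1, hca1, one_mul, one_mul, one_mul]
  exact hu.add_roundingSlack_nonneg_of_cycle hw ha hb hc hab hbc hac
    (hh.half_le a ha b hb hab hab1) (hh.half_le b hb c hc hbc hbc1)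
    (hh.half_le c hc a ha hac.symm hca1)

theorem roundedCost_rotations_le (hh : IsHalfRounding S u h) (hu : IsKendallLPFeasible S u)
    (hw : IsTriangleWeight S w) (ha : a ∈ S) (hb : b ∈ S) (hc : c ∈ S)
    (hab : a ≠ b) (hbc : b ≠ c) (hac : a ≠ c) :
    roundedCost h w a b c + roundedCost h w b c a + roundedCost h w c a b ≤
      2 * (fractionalCost u h w a b c + fractionalCost u h w b c a +
        fractionalCost u h w c a b) := by
  have split : 2 * (fractionalCost u h w a b c + fractionalCost u h w b c a +
        fractionalCost u h w c a b) -
      (roundedCost h w a b c + roundedCost h w b c a + roundedCost h w c a b) =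
      h a c * h c b * (h a b * roundingSlack u w a b) +
      h b a * h a c * (h b c * roundingSlack u w b c) +
      h c b * h b a * (h c a * roundingSlack u w c a) +
      h a c * h c b * h b a *
        (roundingSlack u w c a + roundingSlack u w b c + roundingSlack u w a b) := by
    unfold fractionalCost roundedCost roundingSlack
    rw [show h b a = 1 - h a b by linarith [hh.add_swap a ha b hb hab],
      show h c b = 1 - h b c by linarith [hh.add_swap b hb c hc hbc],
      show h a c = 1 - h c a by linarith [hh.add_swap c hc a ha hac.symm]]
    ring
  have transitive_ab := mul_nonneg (mul_nonneg (hh.nonneg ha hc hac) (hh.nonneg hc hb hbc.symm))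
    (hh.mul_roundingSlack_nonneg hu hw ha hb hab)
  have transitive_bc := mul_nonneg (mul_nonneg (hh.nonneg hb ha hab.symm) (hh.nonneg ha hc hac))
    (hh.mul_roundingSlack_nonneg hu hw hb hc hbc)
  have transitive_ca :=
    mul_nonneg (mul_nonneg (hh.nonneg hc hb hbc.symm) (hh.nonneg hb ha hab.symm))
      (hh.mul_roundingSlack_nonneg hu hw hc ha hac.symm)
  have cyclic := hh.cycle_mul_roundingSlack_nonneg hu hw ha hc hb hac hbc.symm hab
  linarith

end IsHalfRounding

end

/-- Triple-wise rounding inequality for mmKT-Conv: for a feasible fractional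
LP solution `u`, its `1/2`-threshold rounding `h`, and nonnegative weights `w`
satisfying the triangle inequality, the rounded cost summed over all six
orderings of a triple of distinct indices is at most twice the LP cost. -/
theorem triple_rounding_ineq {ι : Type*} (x y z : ι)
    (hxy : x ≠ y) (hxz : x ≠ z) (hyz : y ≠ z)
    (u w h : ι → ι → ℝ)
    (hu01 : ∀ a ∈ ({x, y, z} : Set ι), ∀ b ∈ ({x, y, z} : Set ι), a ≠ b →
      0 ≤ u a b ∧ u a b ≤ 1)
    (hu_sum : ∀ a ∈ ({x, y, z} : Set ι), ∀ b ∈ ({x, y, z} : Set ι), a ≠ b →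
      u a b + u b a = 1)
    (hu_tri : ∀ a ∈ ({x, y, z} : Set ι), ∀ b ∈ ({x, y, z} : Set ι),
      ∀ c ∈ ({x, y, z} : Set ι), a ≠ b → b ≠ c → a ≠ c →
      1 ≤ u a b + u b c + u c a)
    (hw0 : ∀ a ∈ ({x, y, z} : Set ι), ∀ b ∈ ({x, y, z} : Set ι), a ≠ b →
      0 ≤ w a b)
    (hw_tri : ∀ a ∈ ({x, y, z} : Set ι), ∀ b ∈ ({x, y, z} : Set ι),
      ∀ c ∈ ({x, y, z} : Set ι), a ≠ b → b ≠ c → a ≠ c →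
      w a c ≤ w a b + w b c)
    (hh01 : ∀ a ∈ ({x, y, z} : Set ι), ∀ b ∈ ({x, y, z} : Set ι), a ≠ b →
      h a b = 0 ∨ h a b = 1)
    (hh_sum : ∀ a ∈ ({x, y, z} : Set ι), ∀ b ∈ ({x, y, z} : Set ι), a ≠ b →
      h a b + h b a = 1)
    (hhu : ∀ a ∈ ({x, y, z} : Set ι), ∀ b ∈ ({x, y, z} : Set ι), a ≠ b →
      h a b = 1 → 1 / 2 ≤ u a b) :
    h x z * h z y * w y x + h x y * h y z * w z x + h y z * h z x * w x y +
      h y x * h x z * w z y + h z y * h y x * w x z + h z x * h x y * w y z ≤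
    2 * (h x z * h z y * (u x y * w y x + u y x * w x y) +
      h x y * h y z * (u x z * w z x + u z x * w x z) +
      h y z * h z x * (u y x * w x y + u x y * w y x) +
      h y x * h x z * (u y z * w z y + u z y * w y z) +
      h z y * h y x * (u z x * w x z + u x z * w z x) +
      h z x * h x y * (u z y * w y z + u y z * w z y)) := by
  have hu : IsKendallLPFeasible {x, y, z} u := ⟨hu01, hu_sum, hu_tri⟩
  have hw : IsTriangleWeight {x, y, z} w := ⟨hw0, hw_tri⟩
  have hh : IsHalfRounding {x, y, z} u h := ⟨hh01, hh_sum, hhu⟩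
  have mx : x ∈ ({x, y, z} : Set ι) := by simp
  have my : y ∈ ({x, y, z} : Set ι) := by simp
  have mz : z ∈ ({x, y, z} : Set ι) := by simp
  have rotations_xyz := hh.roundedCost_rotations_le hu hw mx my mz hxy hyz hxz
  have rotations_xzy := hh.roundedCost_rotations_le hu hw mx mz my hxz hyz.symm hxy
  simp only [roundedCost, fractionalCost] at rotations_xyz rotations_xzy
  linarith
end

section
/- Let V be a nonempty finite set and let u, w, h : V × V → ℝ satisfy: 0 ≤ u_{xy} ≤ 1 and u_{xy} + u_{yx} = 1 for all distinct x, y; u_{xy} + u_{yz} + u_{zx} ≥ 1 for all distinct x, y, z; w_{xx} = 0, w_{xy} ≥ 0, and w_{xy} + w_{yz} ≥ w_{xz} for all distinct x, y, z; h_{xy} ∈ {0,1}, h_{xy} + h_{yx} = 1, and h_{xy} = 1 implies u_{xy} ≥ 1/2, for all distinct x, y. For each v ∈ V let P_v = {(x, y) : x, y ∈ V \ {v}, x ≠ y, h_{vx} = 1 and h_{yv} = 1}, and define A_v = ∑_{x ≠ v} (h_{xv}·w_{vx} + h_{vx}·w_{xv}) + ∑_{(x,y) ∈ P_v} w_{xy}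 and B_v = ∑_{x ≠ v} (u_{xv}·w_{vx} + u_{vx}·w_{xv}) + ∑_{(x,y) ∈ P_v} (u_{xy}·w_{yx} + u_{yx}·w_{xy}). Then ∑_{v ∈ V} A_v ≤ 2·∑_{v ∈ V} B_v. -/
/-!
Write `D(x, y) = w x y - 2 (u x y w y x + u y x w x y)`. Then `A_v - 2 B_v` is a sum of terms
`h w - 2 u w ≤ 0` over the edges at `v` (where `h = 1` we have `u ≥ 1/2`) and of the defects
`D(x, y)` of the pivot pairs. A pivot pair with `h y x = 1` has `D(x, y) ≤ 0` because
`u y x ≥ 1/2`. In the other pairs `h x y = 1`, so `v → x → y → v` is a directed 3-cycle of `h`;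
summed over all pivots, each such cycle is met once from each of its vertices, and the three
defects of a cycle add up to at most `0` by the triangle inequalities for `w` and `u`.
-/

open Finset

section

variable {ι : Type*}

def pairDefect (u w : ι → ι → ℝ) (x y : ι) : ℝ :=
  w x y - 2 * (u x y * w y x + u y x * w x y)

theorem pairDefect_nonpos {u w : ι → ι → ℝ} {x y : ι} (hu : 0 ≤ u x y) (hu_half : 1 / 2 ≤ u y x)
    (hwxy : 0 ≤ w x y) (hwyx : 0 ≤ w y x) : pairDefect u w x y ≤ 0 := by
  unfold pairDefect
  nlinarith [mul_nonneg hu hwyx]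

theorem pairDefect_cycle_nonpos {u w : ι → ι → ℝ} {a b c : ι}
    (hwba : 0 ≤ w b a) (hwcb : 0 ≤ w c b) (hwac : 0 ≤ w a c)
    (hw_ab : w a b ≤ w a c + w c b) (hw_bc : w b c ≤ w b a + w a c)
    (hw_ca : w c a ≤ w c b + w b a)
    (hu_ab : 1 / 2 ≤ u a b) (hu_bc : 1 / 2 ≤ u b c) (hu_ca : 1 / 2 ≤ u c a)
    (hs_ab : u a b + u b a = 1) (hs_bc : u b c + u c b = 1) (hs_ca : u c a + u a c = 1)
    (hu_tri : 1 ≤ u b a + u a c + u c b) :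
    pairDefect u w a b + pairDefect u w b c + pairDefect u w c a ≤ 0 := by
  unfold pairDefect
  set W := w b a + w c b + w a c
  -- `W` is the backward weight of the cycle; by the triangle inequality for `w`, each forward
  -- weight is at most `W` minus the backward weight of the same pair.
  have hab : 0 ≤ (2 * u a b - 1) * (W - w b a - w a b) := mul_nonneg (by linarith) (by linarith)
  have hbc : 0 ≤ (2 * u b c - 1) * (W - w c b - w b c) := mul_nonneg (by linarith) (by linarith)
  have hca : 0 ≤ (2 * u c a - 1) * (W - w a c - w c a) := mul_nonneg (by linarith) (by linarith)
  have hab' : 0 ≤ (2 * u a b - 1) * w b a := mul_nonneg (by linarith) hwba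
  have hbc' : 0 ≤ (2 * u b c - 1) * w c b := mul_nonneg (by linarith) hwcb
  have hca' : 0 ≤ (2 * u c a - 1) * w a c := mul_nonneg (by linarith) hwac
  have hsum : 0 ≤ (u b a + u a c + u c b - 1) * W :=
    mul_nonneg (by linarith) (by positivity)
  rw [show u b a = 1 - u a b by linarith, show u c b = 1 - u b c by linarith,
    show u a c = 1 - u c a by linarith] at hu_tri hsum ⊢
  linarith

theorem mul_le_two_mul_of_rounding {h u c : ℝ} (hh : h = 0 ∨ h = 1) (hu : 0 ≤ u)
    (hhu : h = 1 → 1 / 2 ≤ u) (hc : 0 ≤ c) : h * c ≤ 2 * (u * c) := by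
  rcases hh with rfl | rfl
  · simpa using mul_nonneg hu hc
  · nlinarith [hhu rfl]

section Rounding

variable {V : Finset ι} {u w h : ι → ι → ℝ}

theorem sum_erase_rounding_le [DecidableEq ι] (hu0 : ∀ x ∈ V, ∀ y ∈ V, x ≠ y → 0 ≤ u x y)
    (hw0 : ∀ x ∈ V, ∀ y ∈ V, x ≠ y → 0 ≤ w x y)
    (hh01 : ∀ x ∈ V, ∀ y ∈ V, x ≠ y → h x y = 0 ∨ h x y = 1)
    (hhu : ∀ x ∈ V, ∀ y ∈ V, x ≠ y → h x y = 1 → 1 / 2 ≤ u x y) {v : ι} (hv : v ∈ V) :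
    ∑ x ∈ V.erase v, (h x v * w v x + h v x * w x v) ≤
      2 * ∑ x ∈ V.erase v, (u x v * w v x + u v x * w x v) := by
  rw [mul_sum]
  refine sum_le_sum fun x hx => ?_
  obtain ⟨hxv, hxV⟩ := mem_erase.mp hx
  have hx_v := mul_le_two_mul_of_rounding (hh01 x hxV v hv hxv) (hu0 x hxV v hv hxv)
    (hhu x hxV v hv hxv) (hw0 v hv x hxV hxv.symm)
  have hv_x := mul_le_two_mul_of_rounding (hh01 v hv x hxV hxv.symm) (hu0 v hv x hxV hxv.symm)
    (hhu v hv x hxV hxv.symm) (hw0 x hxV v hv hxv)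
  linarith

theorem pairDefect_nonpos_of_rounding (hu0 : ∀ x ∈ V, ∀ y ∈ V, x ≠ y → 0 ≤ u x y)
    (hw0 : ∀ x ∈ V, ∀ y ∈ V, x ≠ y → 0 ≤ w x y)
    (hh01 : ∀ x ∈ V, ∀ y ∈ V, x ≠ y → h x y = 0 ∨ h x y = 1)
    (hh_sum : ∀ x ∈ V, ∀ y ∈ V, x ≠ y → h x y + h y x = 1)
    (hhu : ∀ x ∈ V, ∀ y ∈ V, x ≠ y → h x y = 1 → 1 / 2 ≤ u x y)
    {x y : ι} (hx : x ∈ V) (hy : y ∈ V) (hxy : x ≠ y) (hh : h x y ≠ 1) :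
    pairDefect u w x y ≤ 0 := by
  have hyx : h y x = 1 := by
    have := hh_sum x hx y hy hxy
    have := (hh01 x hx y hy hxy).resolve_right hh
    linarith
  exact pairDefect_nonpos (hu0 x hx y hy hxy) (hhu y hy x hx hxy.symm hyx)
    (hw0 x hx y hy hxy) (hw0 y hy x hx hxy.symm)

theorem sum_pairDefect_le_sum_filter (hu0 : ∀ x ∈ V, ∀ y ∈ V, x ≠ y → 0 ≤ u x y)
    (hw0 : ∀ x ∈ V, ∀ y ∈ V, x ≠ y → 0 ≤ w x y)
    (hh01 : ∀ x ∈ V, ∀ y ∈ V, x ≠ y → h x y = 0 ∨ h x y = 1)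
    (hh_sum : ∀ x ∈ V, ∀ y ∈ V, x ≠ y → h x y + h y x = 1)
    (hhu : ∀ x ∈ V, ∀ y ∈ V, x ≠ y → h x y = 1 → 1 / 2 ≤ u x y)
    {S : Finset (ι × ι)} (hS : ∀ p ∈ S, p.1 ∈ V ∧ p.2 ∈ V ∧ p.1 ≠ p.2) :
    ∑ p ∈ S, pairDefect u w p.1 p.2 ≤
      ∑ p ∈ S.filter (fun p => h p.1 p.2 = 1), pairDefect u w p.1 p.2 := by
  rw [← sum_filter_add_sum_filter_not S fun p => h p.1 p.2 = 1]
  refine add_le_of_nonpos_right (sum_nonpos fun p hp => ?_)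
  obtain ⟨hpS, hh⟩ := mem_filter.mp hp
  obtain ⟨hx, hy, hxy⟩ := hS p hpS
  exact pairDefect_nonpos_of_rounding hu0 hw0 hh01 hh_sum hhu hx hy hxy hh

end Rounding

def rotateTriple (α : Type*) : α × α × α ≃ α × α × α where
  toFun t := (t.2.1, t.2.2, t.1)
  invFun t := (t.2.2, t.1, t.2.1)
  left_inv _ := rfl
  right_inv _ := rfl

@[simp]
theorem rotateTriple_apply {α : Type*} (a b c : α) : rotateTriple α (a, b, c) = (b, c, a) := rfl

def cyclicTriples (V : Finset ι) (r : ι → ι → Prop) [DecidableRel r] : Finset (ι × ι × ι) :=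
  (V ×ˢ V ×ˢ V).filter fun t => r t.1 t.2.1 ∧ r t.2.1 t.2.2 ∧ r t.2.2 t.1

section CyclicTriples

variable {V : Finset ι} {r : ι → ι → Prop} [DecidableRel r]

@[simp]
theorem mem_cyclicTriples {a b c : ι} :
    (a, b, c) ∈ cyclicTriples V r ↔ a ∈ V ∧ b ∈ V ∧ c ∈ V ∧ r a b ∧ r b c ∧ r c a := by
  simp [cyclicTriples, and_assoc]

theorem rotateTriple_mem_cyclicTriples_iff {t : ι × ι × ι} :
    rotateTriple ι t ∈ cyclicTriples V r ↔ t ∈ cyclicTriples V r := by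
  obtain ⟨a, b, c⟩ := t
  simp only [rotateTriple_apply, mem_cyclicTriples]
  tauto

theorem sum_cyclicTriples_nonpos {g : ι × ι × ι → ℝ}
    (hg : ∀ t ∈ cyclicTriples V r,
      g t + g (rotateTriple ι t) + g (rotateTriple ι (rotateTriple ι t)) ≤ 0) :
    ∑ t ∈ cyclicTriples V r, g t ≤ 0 := by
  have hrot (f : ι × ι × ι → ℝ) :
      ∑ t ∈ cyclicTriples V r, f (rotateTriple ι t) = ∑ t ∈ cyclicTriples V r, f t :=
    sum_equiv (rotateTriple ι) (fun _ => rotateTriple_mem_cyclicTriples_iff.symm) fun _ _ => rfl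
  have h3 : 3 * ∑ t ∈ cyclicTriples V r, g t = ∑ t ∈ cyclicTriples V r,
      (g t + g (rotateTriple ι t) + g (rotateTriple ι (rotateTriple ι t))) := by
    rw [sum_add_distrib, sum_add_distrib, hrot fun t => g (rotateTriple ι t), hrot]
    ring
  linarith [sum_nonpos hg]

end CyclicTriples

section Pivot

variable [DecidableEq ι] {V : Finset ι} {u w h : ι → ι → ℝ}

theorem pairDefect_cycle_nonpos_of_mem
    (hu_sum : ∀ x ∈ V, ∀ y ∈ V, x ≠ y → u x y + u y x = 1)
    (hu_tri : ∀ x ∈ V, ∀ y ∈ V, ∀ z ∈ V, x ≠ y → y ≠ z → x ≠ z →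
      1 ≤ u x y + u y z + u z x)
    (hw0 : ∀ x ∈ V, ∀ y ∈ V, x ≠ y → 0 ≤ w x y)
    (hw_tri : ∀ x ∈ V, ∀ y ∈ V, ∀ z ∈ V, x ≠ y → y ≠ z → x ≠ z →
      w x z ≤ w x y + w y z)
    (hhu : ∀ x ∈ V, ∀ y ∈ V, x ≠ y → h x y = 1 → 1 / 2 ≤ u x y) {a b c : ι}
    (habc : (a, b, c) ∈ cyclicTriples V fun x y => x ≠ y ∧ h x y = 1) :
    pairDefect u w a b + pairDefect u w b c + pairDefect u w c a ≤ 0 := by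
  obtain ⟨ha, hb, hc, ⟨hab, hhab⟩, ⟨hbc, hhbc⟩, ⟨hca, hhca⟩⟩ := mem_cyclicTriples.mp habc
  exact pairDefect_cycle_nonpos (hw0 b hb a ha hab.symm) (hw0 c hc b hb hbc.symm)
    (hw0 a ha c hc hca.symm) (hw_tri a ha c hc b hb hca.symm hbc.symm hab)
    (hw_tri b hb a ha c hc hab.symm hca.symm hbc) (hw_tri c hc b hb a ha hbc.symm hab.symm hca)
    (hhu a ha b hb hab hhab) (hhu b hb c hc hbc hhbc) (hhu c hc a ha hca hhca)
    (hu_sum a ha b hb hab) (hu_sum b hb c hc hbc) (hu_sum c hc a ha hca)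
    (hu_tri b hb a ha c hc hab.symm hca.symm hbc)

theorem sum_sum_filter_eq_sum_cyclicTriples {P : ι → Finset (ι × ι)}
    (hP : ∀ v, ∀ p : ι × ι, p ∈ P v ↔
      p.1 ∈ V ∧ p.2 ∈ V ∧ p.1 ≠ v ∧ p.2 ≠ v ∧ p.1 ≠ p.2 ∧ h v p.1 = 1 ∧ h p.2 v = 1)
    (g : ι × ι → ℝ) :
    ∑ v ∈ V, ∑ p ∈ (P v).filter (fun p => h p.1 p.2 = 1), g p =
      ∑ t ∈ cyclicTriples V (fun x y => x ≠ y ∧ h x y = 1), g t.2 := by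
  rw [cyclicTriples, sum_filter, sum_product]
  refine sum_congr rfl fun v _ => ?_
  rw [← sum_filter]
  congr 1
  ext p
  simp only [mem_filter, mem_product, hP]
  tauto

end Pivot

end

theorem sum_pivot_cost_le_general {ι : Type*} [DecidableEq ι]
    (V : Finset ι)
    (u w h : ι → ι → ℝ)
    (hu01 : ∀ x ∈ V, ∀ y ∈ V, x ≠ y → 0 ≤ u x y ∧ u x y ≤ 1)
    (hu_sum : ∀ x ∈ V, ∀ y ∈ V, x ≠ y → u x y + u y x = 1)
    (hu_tri : ∀ x ∈ V, ∀ y ∈ V, ∀ z ∈ V, x ≠ y → y ≠ z → x ≠ z →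
      1 ≤ u x y + u y z + u z x)
    (hw0 : ∀ x ∈ V, ∀ y ∈ V, x ≠ y → 0 ≤ w x y)
    (hw_tri : ∀ x ∈ V, ∀ y ∈ V, ∀ z ∈ V, x ≠ y → y ≠ z → x ≠ z →
      w x z ≤ w x y + w y z)
    (hh01 : ∀ x ∈ V, ∀ y ∈ V, x ≠ y → h x y = 0 ∨ h x y = 1)
    (hh_sum : ∀ x ∈ V, ∀ y ∈ V, x ≠ y → h x y + h y x = 1)
    (hhu : ∀ x ∈ V, ∀ y ∈ V, x ≠ y → h x y = 1 → 1 / 2 ≤ u x y)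
    (P : ι → Finset (ι × ι))
    (hP : ∀ v, ∀ p : ι × ι, p ∈ P v ↔
      p.1 ∈ V ∧ p.2 ∈ V ∧ p.1 ≠ v ∧ p.2 ≠ v ∧ p.1 ≠ p.2 ∧
        h v p.1 = 1 ∧ h p.2 v = 1)
    (A B : ι → ℝ)
    (hA : ∀ v ∈ V, A v =
      (∑ x ∈ V.erase v, (h x v * w v x + h v x * w x v)) +
        ∑ p ∈ P v, w p.1 p.2)
    (hB : ∀ v ∈ V, B v =
      (∑ x ∈ V.erase v, (u x v * w v x + u v x * w x v)) +
        ∑ p ∈ P v, (u p.1 p.2 * w p.2 p.1 + u p.2 p.1 * w p.1 p.2)) :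
    ∑ v ∈ V, A v ≤ 2 * ∑ v ∈ V, B v := by
  have hu0 x hx y hy hxy := (hu01 x hx y hy hxy).1
  have hpivot (v) (hv : v ∈ V) : A v - 2 * B v ≤
      ∑ p ∈ (P v).filter (fun p => h p.1 p.2 = 1), pairDefect u w p.1 p.2 := by
    have hedges := sum_erase_rounding_le hu0 hw0 hh01 hhu hv
    have hpairs := sum_pairDefect_le_sum_filter hu0 hw0 hh01 hh_sum hhu (S := P v) fun p hp =>
      have ⟨hx, hy, _, _, hxy, _⟩ := (hP v p).mp hp
      ⟨hx, hy, hxy⟩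
    rw [hA v hv, hB v hv]
    simp only [pairDefect, sum_sub_distrib, ← mul_sum] at hpairs ⊢
    linarith
  have hcycles : ∑ t ∈ cyclicTriples V (fun x y => x ≠ y ∧ h x y = 1),
      pairDefect u w t.2.1 t.2.2 ≤ 0 :=
    sum_cyclicTriples_nonpos fun ⟨a, b, c⟩ habc => by
      have := pairDefect_cycle_nonpos_of_mem hu_sum hu_tri hw0 hw_tri hhu habc
      simp only [rotateTriple_apply]
      linarith
  have htotal := sum_le_sum hpivot
  rw [sum_sum_filter_eq_sum_cyclicTriples hP, sum_sub_distrib, ← mul_sum] at htotal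
  linarith

/-- Summed pivot-cost bound for mmKT-Conv rounding: the total rounding cost
`∑_v A_v` is at most twice the total LP cost `∑_v B_v`. -/
theorem sum_pivot_cost_le {ι : Type*} [DecidableEq ι]
    (V : Finset ι) (hV : V.Nonempty)
    (u w h : ι → ι → ℝ)
    (hu01 : ∀ x ∈ V, ∀ y ∈ V, x ≠ y → 0 ≤ u x y ∧ u x y ≤ 1)
    (hu_sum : ∀ x ∈ V, ∀ y ∈ V, x ≠ y → u x y + u y x = 1)
    (hu_tri : ∀ x ∈ V, ∀ y ∈ V, ∀ z ∈ V, x ≠ y → y ≠ z → x ≠ z →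
      1 ≤ u x y + u y z + u z x)
    (hw_diag : ∀ x ∈ V, w x x = 0)
    (hw0 : ∀ x ∈ V, ∀ y ∈ V, x ≠ y → 0 ≤ w x y)
    (hw_tri : ∀ x ∈ V, ∀ y ∈ V, ∀ z ∈ V, x ≠ y → y ≠ z → x ≠ z →
      w x z ≤ w x y + w y z)
    (hh01 : ∀ x ∈ V, ∀ y ∈ V, x ≠ y → h x y = 0 ∨ h x y = 1)
    (hh_sum : ∀ x ∈ V, ∀ y ∈ V, x ≠ y → h x y + h y x = 1)
    (hhu : ∀ x ∈ V, ∀ y ∈ V, x ≠ y → h x y = 1 → 1 / 2 ≤ u x y)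
    (P : ι → Finset (ι × ι))
    (hP : ∀ v, ∀ p : ι × ι, p ∈ P v ↔
      p.1 ∈ V ∧ p.2 ∈ V ∧ p.1 ≠ v ∧ p.2 ≠ v ∧ p.1 ≠ p.2 ∧
        h v p.1 = 1 ∧ h p.2 v = 1)
    (A B : ι → ℝ)
    (hA : ∀ v ∈ V, A v =
      (∑ x ∈ V.erase v, (h x v * w v x + h v x * w x v)) +
        ∑ p ∈ P v, w p.1 p.2)
    (hB : ∀ v ∈ V, B v =
      (∑ x ∈ V.erase v, (u x v * w v x + u v x * w x v)) +
        ∑ p ∈ P v, (u p.1 p.2 * w p.2 p.1 + u p.2 p.1 * w p.1 p.2)) :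
    ∑ v ∈ V, A v ≤ 2 * ∑ v ∈ V, B v :=
  sum_pivot_cost_le_general V u w h hu01 hu_sum hu_tri hw0 hw_tri hh01 hh_sum hhu P hP A B hA hB
end

section
/- Let V be a nonempty finite set and let u, w, h : V × V → ℝ satisfy: 0 ≤ u_{xy} ≤ 1 and u_{xy} + u_{yx} = 1 for all distinct x, y; u_{xy} + u_{yz} + u_{zx} ≥ 1 for all distinct x, y, z; w_{xx} = 0, w_{xy} ≥ 0, and w_{xy} + w_{yz} ≥ w_{xz} for all distinct x, y, z; h_{xy} ∈ {0,1}, h_{xy} + h_{yx} = 1, and h_{xy} = 1 implies u_{xy} ≥ 1/2, for all distinct x, y. For each v ∈ V let P_v = {(x, y) : x, y ∈ V \ {v}, x ≠ y, h_{vx} = 1 and h_{yv} = 1}, A_v = ∑_{x ≠ v} (h_{xv}·w_{vx} + h_{vx}·w_{xv}) + ∑_{(x,y) ∈ P_v} w_{xy}, and B_v = ∑_{x ≠ v} (u_{xv}·w_{vx} + u_{vx}·w_{xv}) + ∑_{(x,y) ∈ P_v} (u_{xy}·w_{yx} + u_{yx}·w_{xy}). Then there exists a pivot v ∈ V such that A_v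 ≤ 2·B_v. -/
/-!
Summing over all pivots, it suffices to show `∑ A_v ≤ 2 ∑ B_v`. The single-element terms compare
termwise, since a rounding at `1/2` satisfies `h ≤ 2u`. The pair terms are indexed by triangles
`(v, x, y)` with `y → v → x` in `h`. If `y → x` as well, the triangle is transitive and again
`u_{yx} ≥ 1/2` bounds its term. Otherwise `v → x → y → v` is a directed cycle; it occurs once for
each of its three rotations, and only the sum of those three terms is bounded, using the triangle
inequalities for `w` and the triangle constraint for `u`.
-/

open Finset

theorem Finset.sum_nonneg_of_rotation_three {α M : Type*} [AddCommMonoid M] [LinearOrder M]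
    [IsOrderedAddMonoid M] {s : Finset α} {σ : α → α} (hσ : ∀ t ∈ s, σ t ∈ s)
    (hσ3 : ∀ t ∈ s, σ (σ (σ t)) = t) {f : α → M}
    (hf : ∀ t ∈ s, 0 ≤ f t + f (σ t) + f (σ (σ t))) : 0 ≤ ∑ t ∈ s, f t := by
  have hσσ : ∀ t ∈ s, σ (σ t) ∈ s := fun t ht => hσ _ (hσ _ ht)
  have hrot : ∑ t ∈ s, f (σ t) = ∑ t ∈ s, f t :=
    sum_nbij' σ (fun t => σ (σ t)) hσ hσσ hσ3 hσ3 (fun _ _ => rfl)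
  have hrot2 : ∑ t ∈ s, f (σ (σ t)) = ∑ t ∈ s, f t :=
    sum_nbij' (fun t => σ (σ t)) σ hσσ hσ hσ3 hσ3 (fun _ _ => rfl)
  have h3 : 3 • ∑ t ∈ s, f t = ∑ t ∈ s, (f t + f (σ t) + f (σ (σ t))) := by
    rw [sum_add_distrib, sum_add_distrib, hrot, hrot2]
    abel
  exact (nsmul_nonneg_iff three_ne_zero).1 (h3 ▸ sum_nonneg hf)

theorem le_two_mul_of_eq_zero_or_eq_one {r p : ℝ} (hr : r = 0 ∨ r = 1) (hp : 0 ≤ p)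
    (hrp : r = 1 → 1 / 2 ≤ p) : r ≤ 2 * p := by
  rcases hr with rfl | rfl
  · linarith
  · linarith [hrp rfl]

section PairSlack

variable {ι : Type*} (u w : ι → ι → ℝ)

/-- Twice the LP cost of the pair `{x, y}` minus the cost `w x y` of placing `y` before `x`. -/
def pairSlack (x y : ι) : ℝ :=
  2 * (u x y * w y x + u y x * w x y) - w x y

variable {u w}

theorem pairSlack_nonneg {x y : ι} (hwxy : 0 ≤ w x y) (hwyx : 0 ≤ w y x) (huxy : 0 ≤ u x y)
    (huyx : 1 / 2 ≤ u y x) : 0 ≤ pairSlack u w x y := by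
  unfold pairSlack
  linarith [mul_nonneg huxy hwyx, mul_le_mul_of_nonneg_right huyx hwxy]

theorem pairSlack_cycle_nonneg {x y z : ι}
    (hwyx : 0 ≤ w y x) (hwzy : 0 ≤ w z y) (hwxz : 0 ≤ w x z)
    (hw_xy : w x y ≤ w x z + w z y) (hw_yz : w y z ≤ w y x + w x z)
    (hw_zx : w z x ≤ w z y + w y x)
    (hu_xy : u x y + u y x = 1) (hu_yz : u y z + u z y = 1) (hu_zx : u z x + u x z = 1)
    (hxy : 1 / 2 ≤ u x y) (hyz : 1 / 2 ≤ u y z) (hzx : 1 / 2 ≤ u z x)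
    (hu_tri : 1 ≤ u y x + u x z + u z y) :
    0 ≤ pairSlack u w x y + pairSlack u w y z + pairSlack u w z x := by
  unfold pairSlack
  rw [show u y x = 1 - u x y by linarith, show u z y = 1 - u y z by linarith,
    show u x z = 1 - u z x by linarith] at hu_tri ⊢
  have ha : 0 ≤ 2 * u x y - 1 := by linarith
  have hb : 0 ≤ 2 * u y z - 1 := by linarith
  have hc : 0 ≤ 2 * u z x - 1 := by linarith
  linarith [mul_nonneg ha (sub_nonneg.2 hw_xy), mul_nonneg hb (sub_nonneg.2 hw_yz),
    mul_nonneg hc (sub_nonneg.2 hw_zx), mul_nonneg ha hwyx, mul_nonneg hb hwzy, mul_nonneg hc hwxz,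
    mul_nonneg (by linarith : 0 ≤ 2 - u x y - u y z - u z x)
      (add_nonneg (add_nonneg hwyx hwzy) hwxz)]

end PairSlack

theorem sum_pivotPairs_le {ι : Type*} (V : Finset ι) (u w h : ι → ι → ℝ)
    (hu0 : ∀ x ∈ V, ∀ y ∈ V, x ≠ y → 0 ≤ u x y)
    (hu_sum : ∀ x ∈ V, ∀ y ∈ V, x ≠ y → u x y + u y x = 1)
    (hu_tri : ∀ x ∈ V, ∀ y ∈ V, ∀ z ∈ V, x ≠ y → y ≠ z → x ≠ z →
      1 ≤ u x y + u y z + u z x)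
    (hw0 : ∀ x ∈ V, ∀ y ∈ V, x ≠ y → 0 ≤ w x y)
    (hw_tri : ∀ x ∈ V, ∀ y ∈ V, ∀ z ∈ V, x ≠ y → y ≠ z → x ≠ z →
      w x z ≤ w x y + w y z)
    (hh01 : ∀ x ∈ V, ∀ y ∈ V, x ≠ y → h x y = 0 ∨ h x y = 1)
    (hh_sum : ∀ x ∈ V, ∀ y ∈ V, x ≠ y → h x y + h y x = 1)
    (hhu : ∀ x ∈ V, ∀ y ∈ V, x ≠ y → h x y = 1 → 1 / 2 ≤ u x y)
    (P : ι → Finset (ι × ι))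
    (hP : ∀ v, ∀ p : ι × ι, p ∈ P v ↔
      p.1 ∈ V ∧ p.2 ∈ V ∧ p.1 ≠ v ∧ p.2 ≠ v ∧ p.1 ≠ p.2 ∧
        h v p.1 = 1 ∧ h p.2 v = 1) :
    ∑ v ∈ V, ∑ p ∈ P v, w p.1 p.2 ≤
      2 * ∑ v ∈ V, ∑ p ∈ P v, (u p.1 p.2 * w p.2 p.1 + u p.2 p.1 * w p.1 p.2) := by
  suffices hslack : 0 ≤ ∑ t ∈ V.sigma P, pairSlack u w t.2.1 t.2.2 by
    simp only [pairSlack, sum_sub_distrib, ← mul_sum] at hslack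
    rw [sum_sigma', sum_sigma']
    linarith
  rw [← sum_filter_add_sum_filter_not _ (fun t => h t.2.1 t.2.2 = 1)]
  refine add_nonneg ?cyclic ?transitive
  case transitive =>
    refine sum_nonneg fun ⟨v, x, y⟩ ht => ?_
    simp only [mem_filter, mem_sigma, hP] at ht
    obtain ⟨⟨-, hx, hy, -, -, hxy, -, -⟩, hxy1⟩ := ht
    have hyx1 : h y x = 1 := by
      linarith [hh_sum x hx y hy hxy, (hh01 x hx y hy hxy).resolve_right hxy1]
    exact pairSlack_nonneg (hw0 x hx y hy hxy) (hw0 y hy x hx hxy.symm) (hu0 x hx y hy hxy)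
      (hhu y hy x hx hxy.symm hyx1)
  case cyclic =>
    refine sum_nonneg_of_rotation_three (σ := fun t => ⟨t.2.1, t.2.2, t.1⟩) ?_ (fun _ _ => rfl) ?_
    · rintro ⟨v, x, y⟩ ht
      simp only [mem_filter, mem_sigma, hP] at ht ⊢
      obtain ⟨⟨hv, hx, hy, hxv, hyv, hxy, hvx1, hyv1⟩, hxy1⟩ := ht
      exact ⟨⟨hx, hy, hv, hxy.symm, hxv.symm, hyv, hxy1, hvx1⟩, hyv1⟩
    · rintro ⟨v, x, y⟩ ht
      simp only [mem_filter, mem_sigma, hP] at ht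
      obtain ⟨⟨hv, hx, hy, hxv, hyv, hxy, hvx1, hyv1⟩, hxy1⟩ := ht
      exact pairSlack_cycle_nonneg (hw0 y hy x hx hxy.symm) (hw0 v hv y hy hyv.symm)
        (hw0 x hx v hv hxv) (hw_tri x hx v hv y hy hxv hyv.symm hxy)
        (hw_tri y hy x hx v hv hxy.symm hxv hyv) (hw_tri v hv y hy x hx hyv.symm hxy.symm hxv.symm)
        (hu_sum x hx y hy hxy) (hu_sum y hy v hv hyv) (hu_sum v hv x hx hxv.symm)
        (hhu x hx y hy hxy hxy1) (hhu y hy v hv hyv hyv1) (hhu v hv x hx hxv.symm hvx1)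
        (hu_tri y hy x hx v hv hxy.symm hxv hyv)

theorem exists_good_pivot_general {ι : Type*} [DecidableEq ι]
    (V : Finset ι) (hV : V.Nonempty)
    (u w h : ι → ι → ℝ)
    (hu01 : ∀ x ∈ V, ∀ y ∈ V, x ≠ y → 0 ≤ u x y ∧ u x y ≤ 1)
    (hu_sum : ∀ x ∈ V, ∀ y ∈ V, x ≠ y → u x y + u y x = 1)
    (hu_tri : ∀ x ∈ V, ∀ y ∈ V, ∀ z ∈ V, x ≠ y → y ≠ z → x ≠ z →
      1 ≤ u x y + u y z + u z x)
    (hw0 : ∀ x ∈ V, ∀ y ∈ V, x ≠ y → 0 ≤ w x y)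
    (hw_tri : ∀ x ∈ V, ∀ y ∈ V, ∀ z ∈ V, x ≠ y → y ≠ z → x ≠ z →
      w x z ≤ w x y + w y z)
    (hh01 : ∀ x ∈ V, ∀ y ∈ V, x ≠ y → h x y = 0 ∨ h x y = 1)
    (hh_sum : ∀ x ∈ V, ∀ y ∈ V, x ≠ y → h x y + h y x = 1)
    (hhu : ∀ x ∈ V, ∀ y ∈ V, x ≠ y → h x y = 1 → 1 / 2 ≤ u x y)
    (P : ι → Finset (ι × ι))
    (hP : ∀ v, ∀ p : ι × ι, p ∈ P v ↔
      p.1 ∈ V ∧ p.2 ∈ V ∧ p.1 ≠ v ∧ p.2 ≠ v ∧ p.1 ≠ p.2 ∧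
        h v p.1 = 1 ∧ h p.2 v = 1)
    (A B : ι → ℝ)
    (hA : ∀ v ∈ V, A v =
      (∑ x ∈ V.erase v, (h x v * w v x + h v x * w x v)) +
        ∑ p ∈ P v, w p.1 p.2)
    (hB : ∀ v ∈ V, B v =
      (∑ x ∈ V.erase v, (u x v * w v x + u v x * w x v)) +
        ∑ p ∈ P v, (u p.1 p.2 * w p.2 p.1 + u p.2 p.1 * w p.1 p.2)) :
    ∃ v ∈ V, A v ≤ 2 * B v := by
  have hu0 : ∀ x ∈ V, ∀ y ∈ V, x ≠ y → 0 ≤ u x y := fun x hx y hy hxy => (hu01 x hx y hy hxy).1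
  have hround : ∀ x ∈ V, ∀ y ∈ V, x ≠ y → h x y * w y x ≤ 2 * u x y * w y x :=
    fun x hx y hy hxy => mul_le_mul_of_nonneg_right
      (le_two_mul_of_eq_zero_or_eq_one (hh01 x hx y hy hxy) (hu0 x hx y hy hxy)
        (hhu x hx y hy hxy)) (hw0 y hy x hx hxy.symm)
  have hsingles : ∑ v ∈ V, ∑ x ∈ V.erase v, (h x v * w v x + h v x * w x v) ≤
      2 * ∑ v ∈ V, ∑ x ∈ V.erase v, (u x v * w v x + u v x * w x v) := by
    simp only [mul_sum]
    refine sum_le_sum fun v hv => sum_le_sum fun x hx => ?_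
    obtain ⟨hxv, hx⟩ := mem_erase.1 hx
    linarith [hround x hx v hv hxv, hround v hv x hx hxv.symm]
  refine exists_le_of_sum_le hV ?_
  rw [← mul_sum, sum_congr rfl hA, sum_congr rfl hB, sum_add_distrib, sum_add_distrib, mul_add]
  exact add_le_add hsingles
    (sum_pivotPairs_le V u w h hu0 hu_sum hu_tri hw0 hw_tri hh01 hh_sum hhu P hP)

/-- Existence of a good pivot for mmKT-Conv rounding: the summed cost
bound yields by pigeonholing a pivot `v` with `A_v ≤ 2·B_v`. -/
theorem exists_good_pivot {ι : Type*} [DecidableEq ι]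
    (V : Finset ι) (hV : V.Nonempty)
    (u w h : ι → ι → ℝ)
    (hu01 : ∀ x ∈ V, ∀ y ∈ V, x ≠ y → 0 ≤ u x y ∧ u x y ≤ 1)
    (hu_sum : ∀ x ∈ V, ∀ y ∈ V, x ≠ y → u x y + u y x = 1)
    (hu_tri : ∀ x ∈ V, ∀ y ∈ V, ∀ z ∈ V, x ≠ y → y ≠ z → x ≠ z →
      1 ≤ u x y + u y z + u z x)
    (hw_diag : ∀ x ∈ V, w x x = 0)
    (hw0 : ∀ x ∈ V, ∀ y ∈ V, x ≠ y → 0 ≤ w x y)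
    (hw_tri : ∀ x ∈ V, ∀ y ∈ V, ∀ z ∈ V, x ≠ y → y ≠ z → x ≠ z →
      w x z ≤ w x y + w y z)
    (hh01 : ∀ x ∈ V, ∀ y ∈ V, x ≠ y → h x y = 0 ∨ h x y = 1)
    (hh_sum : ∀ x ∈ V, ∀ y ∈ V, x ≠ y → h x y + h y x = 1)
    (hhu : ∀ x ∈ V, ∀ y ∈ V, x ≠ y → h x y = 1 → 1 / 2 ≤ u x y)
    (P : ι → Finset (ι × ι))
    (hP : ∀ v, ∀ p : ι × ι, p ∈ P v ↔
      p.1 ∈ V ∧ p.2 ∈ V ∧ p.1 ≠ v ∧ p.2 ≠ v ∧ p.1 ≠ p.2 ∧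
        h v p.1 = 1 ∧ h p.2 v = 1)
    (A B : ι → ℝ)
    (hA : ∀ v ∈ V, A v =
      (∑ x ∈ V.erase v, (h x v * w v x + h v x * w x v)) +
        ∑ p ∈ P v, w p.1 p.2)
    (hB : ∀ v ∈ V, B v =
      (∑ x ∈ V.erase v, (u x v * w v x + u v x * w x v)) +
        ∑ p ∈ P v, (u p.1 p.2 * w p.2 p.1 + u p.2 p.1 * w p.1 p.2)) :
    ∃ v ∈ V, A v ≤ 2 * B v :=
  exists_good_pivot_general V hV u w h hu01 hu_sum hu_tri hw0 hw_tri hh01 hh_sum hhu P hP A B hA hB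
end

section
/- Let u : Fin n → ℝ and let π be a permutation of Fin n consistent with the ordering of u, i.e., for all x, y, if u(x) < u(y) then π(x) < π(y). Then π minimizes the ℓ₁ distance to u among all permutations: for every permutation ρ of Fin n, ∑_{x} |u(x) − (π(x) : ℝ)| ≤ ∑_{x} |u(x) − (ρ(x) : ℝ)|. -/
/-!
An exchange argument. The cost `c a p = |p - a|` has the Monge property: for `a ≤ b` and `p ≤ q`,
matching `a` with `p` and `b` with `q` is no worse than matching them crosswise. Given any
permutation other than the sorted one, pick the point of its support that is largest in the order
of `u` (ties broken by rank); swapping two ranks so that this point gets its sorted rank does not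
increase the cost and strictly shrinks the support, so induction on the support reaches the sorted
permutation.
-/

open Finset Equiv Equiv.Perm

def IsMonge {α β γ : Type*} [Preorder α] [Preorder β] [Add γ] [LE γ] (c : α → β → γ) : Prop :=
  ∀ ⦃a b : α⦄ ⦃p q : β⦄, a ≤ b → p ≤ q → c a p + c b q ≤ c a q + c b p

theorem isMonge_abs_sub {α : Type*} [AddCommGroup α] [LinearOrder α] [IsOrderedAddMonoid α] :
    IsMonge fun a p : α => |p - a| := by
  intro a b p q _ _
  grind

section Monge

variable {ι γ : Type*} [Fintype ι] [DecidableEq ι]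
  [AddCommGroup γ] [PartialOrder γ] [IsOrderedAddMonoid γ]

/-- The swap changes the matching only at `σ⁻¹ a` and `a`, where it uncrosses it. -/
theorem IsMonge.sum_swap_mul_le {α β : Type*} [Preorder α] [Preorder β] {c : α → β → γ}
    {f : ι → α} {g : ι → β} (hc : IsMonge c) {σ : Perm ι} {a : ι} (ha : σ a ≠ a)
    (hf : f (σ a) ≤ f a) (hg : g (σ.symm a) ≤ g a) :
    ∑ i, c (f ((swap a (σ a) * σ) i)) (g i) ≤ ∑ i, c (f (σ i)) (g i) := by
  have hb : σ.symm a ≠ a := fun h => ha (by simpa using (congrArg σ h).symm)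
  rw [← sub_nonneg, ← sum_sub_distrib, Fintype.sum_eq_add (σ.symm a) a hb]
  · simpa [swap_apply_of_ne_of_ne, sub_add_sub_comm, sub_nonneg, add_comm] using hc hf hg
  · rintro i ⟨hia, hib⟩
    rw [Perm.mul_apply, swap_apply_of_ne_of_ne (fun h => hia (σ.eq_symm_apply.mpr h))
      (σ.injective.ne hib), sub_self]

theorem Monovary.sum_le_sum_comp_perm {α β : Type*} [LinearOrder α] [LinearOrder β]
    {c : α → β → γ} {f : ι → α} {g : ι → β} (hfg : Monovary f g) (hc : IsMonge c)
    (σ : Perm ι) : ∑ i, c (f i) (g i) ≤ ∑ i, c (f (σ i)) (g i) := by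
  obtain rfl | hσ := eq_or_ne σ 1
  · simp
  obtain ⟨a, ha, hmax⟩ := σ.support.exists_max_image (fun i => toLex (g i, f i))
    (nonempty_iff_ne_empty.2 (support_eq_empty_iff.not.2 hσ))
  have hσa : σ a ≠ a := mem_support.1 ha
  have hf : f (σ a) ≤ f a :=
    (Prod.Lex.toLex_le_toLex.1 (hmax _ (apply_mem_support.2 ha))).elim (fun h => hfg h) And.right
  have hg : g (σ.symm a) ≤ g a :=
    (Prod.Lex.toLex_le_toLex.1 (hmax _ (apply_mem_support.1 (by rwa [apply_symm_apply])))).elim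
      le_of_lt (fun h => h.1.le)
  calc ∑ i, c (f i) (g i) ≤ ∑ i, c (f ((swap a (σ a) * σ) i)) (g i) :=
        hfg.sum_le_sum_comp_perm hc _
    _ ≤ ∑ i, c (f (σ i)) (g i) := hc.sum_swap_mul_le hσa hf hg
termination_by σ.support.card
decreasing_by exact card_support_swap_mul hσa

end Monge

/-- A permutation `π` consistent with the ordering of `u` minimizes the ℓ₁
distance to `u` among all permutations. -/
theorem consistent_perm_minimizes_l1 {n : ℕ} (u : Fin n → ℝ)
    (π : Equiv.Perm (Fin n))
    (hπ : ∀ x y : Fin n, u x < u y → π x < π y) :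
    ∀ ρ : Equiv.Perm (Fin n),
      ∑ x : Fin n, |u x - ((π x : ℕ) : ℝ)| ≤
        ∑ x : Fin n, |u x - ((ρ x : ℕ) : ℝ)| := by
  intro ρ
  have hmono : Monovary (fun x => ((π x : ℕ) : ℝ)) u := fun x y h =>
    Nat.cast_le.2 (hπ x y h).le
  simpa using hmono.sum_le_sum_comp_perm isMonge_abs_sub (π⁻¹ * ρ)
end

section
/- Let u : Fin n → ℝ, let ρ be a permutation of Fin n, and suppose x, y ∈ Fin n satisfy u(x) < u(y) and ρ(x) > ρ(y). Let ρ' be the permutation obtained from ρ by exchanging the positions of x and y, i.e., ρ' = ρ ∘ (swap x y). Then ∑_{z} |u(z) − (ρ'(z) : ℝ)| ≤ ∑_{z} |u(z) − (ρ(z) : ℝ)|. -/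
/-- Exchange step: transposing a pair of elements that are ordered
inconsistently with `u` does not increase the ℓ₁ distance to `u`. -/
theorem swap_decreases_l1 {n : ℕ} (u : Fin n → ℝ) (ρ : Equiv.Perm (Fin n))
    (x y : Fin n) (hu : u x < u y) (hρ : ρ y < ρ x) :
    ∑ z : Fin n, |u z - ((((ρ * Equiv.swap x y) z : Fin n) : ℕ) : ℝ)| ≤
      ∑ z : Fin n, |u z - ((ρ z : ℕ) : ℝ)| := by
  have hxy : x ≠ y := fun h => lt_irrefl _ (h ▸ hu)
  set f : Fin n → ℝ := fun z => |u z - ((((ρ * Equiv.swap x y) z : Fin n) : ℕ) : ℝ)| with hf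
  set g : Fin n → ℝ := fun z => |u z - ((ρ z : ℕ) : ℝ)| with hg
  have hsub : ({x, y} : Finset (Fin n)) ⊆ Finset.univ := Finset.subset_univ _
  rw [← Finset.sum_sdiff hsub (f := f), ← Finset.sum_sdiff hsub (f := g)]
  have hcompl : ∑ z ∈ Finset.univ \ {x, y}, f z = ∑ z ∈ Finset.univ \ {x, y}, g z := by
    apply Finset.sum_congr rfl
    intro z hz
    simp only [Finset.mem_sdiff, Finset.mem_insert, Finset.mem_singleton] at hz
    have hzx : z ≠ x := fun h => hz.2 (Or.inl h)
    have hzy : z ≠ y := fun h => hz.2 (Or.inr h)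
    simp [hf, hg, Equiv.swap_apply_of_ne_of_ne hzx hzy]
  rw [hcompl]
  apply add_le_add le_rfl
  rw [Finset.sum_pair hxy, Finset.sum_pair hxy]
  have h1 : f x = |u x - ((ρ y : ℕ) : ℝ)| := by simp [hf]
  have h2 : f y = |u y - ((ρ x : ℕ) : ℝ)| := by simp [hf]
  rw [h1, h2]
  have hcast : (((ρ y : Fin n) : ℕ) : ℝ) < (((ρ x : Fin n) : ℕ) : ℝ) := by
    exact_mod_cast hρ
  simp only [hg]
  rcases abs_cases (u x - ((ρ y : ℕ) : ℝ)) with ⟨e1, _⟩ | ⟨e1, _⟩ <;>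
  rcases abs_cases (u y - ((ρ x : ℕ) : ℝ)) with ⟨e2, _⟩ | ⟨e2, _⟩ <;>
  rcases abs_cases (u x - ((ρ x : ℕ) : ℝ)) with ⟨e3, _⟩ | ⟨e3, _⟩ <;>
  rcases abs_cases (u y - ((ρ y : ℕ) : ℝ)) with ⟨e4, _⟩ | ⟨e4, _⟩ <;>
  rw [e1, e2, e3, e4] <;> linarith
end

section
/- Let d be a pseudometric on a type α, let Σ¹,…,Σ^C (C ≥ 1) be nonempty finite subsets of α with positive weights λ₁,…,λ_C. Fix any ρ ∈ α and set W = max_k λ_k·d_min(ρ, Σ^k). Then there exist k ∈ {1,…,C} and σ ∈ Σ^k such that max_j λ_j·d_min(σ, Σ^j) ≤ 2W. -/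
/-!
Let `k` be the class closest to `ρ` and `σ ∈ Σ^k` a point of it nearest to `ρ`, so that
`d(ρ, σ) ≤ d_min(ρ, Σ^j)` for every class `j`. The triangle inequality through `ρ` gives
`d_min(σ, Σ^j) ≤ d(σ, ρ) + d_min(ρ, Σ^j) ≤ 2 d_min(ρ, Σ^j)`, and multiplying by `λ_j`
bounds each term of the objective of `σ` by `2W`.
-/

/-- The min distance between a point `π` and a nonempty finite set `T` of
points: `min_{σ ∈ T} d(π, σ)`. -/
noncomputable def minDist {α : Type*} (d : α → α → ℝ) (π : α) (T : Finset α)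
    (hT : T.Nonempty) : ℝ :=
  T.inf' hT (d π)

section MinDist

variable {α : Type*} {d : α → α → ℝ}

theorem exists_mem_dist_eq_minDist (π : α) {T : Finset α} (hT : T.Nonempty) :
    ∃ τ ∈ T, d π τ = minDist d π T hT := by
  obtain ⟨τ, hτ, h⟩ := Finset.exists_mem_eq_inf' hT (d π)
  exact ⟨τ, hτ, h.symm⟩

theorem minDist_le_add_minDist (hd_tri : ∀ x y z, d x z ≤ d x y + d y z)
    (σ ρ : α) {T : Finset α} (hT : T.Nonempty) :
    minDist d σ T hT ≤ d σ ρ + minDist d ρ T hT := by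
  obtain ⟨τ, hτ, hρτ⟩ := exists_mem_dist_eq_minDist (d := d) ρ hT
  calc minDist d σ T hT ≤ d σ τ := Finset.inf'_le _ hτ
    _ ≤ d σ ρ + d ρ τ := hd_tri σ ρ τ
    _ = d σ ρ + minDist d ρ T hT := by rw [hρτ]

theorem minDist_le_two_mul_of_dist_le (hd_symm : ∀ x y, d x y = d y x)
    (hd_tri : ∀ x y z, d x z ≤ d x y + d y z) {σ ρ : α} {T : Finset α} (hT : T.Nonempty)
    (hρσ : d ρ σ ≤ minDist d ρ T hT) :
    minDist d σ T hT ≤ 2 * minDist d ρ T hT := by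
  have := minDist_le_add_minDist hd_tri σ ρ hT
  rw [hd_symm σ ρ] at this
  linarith

end MinDist

theorem exists_min_pick_perm_le_two_W_general {α : Type*} (d : α → α → ℝ)
    (hd_symm : ∀ x y, d x y = d y x)
    (hd_tri : ∀ x y z, d x z ≤ d x y + d y z)
    {C : ℕ} (hC : 0 < C)
    (S : Fin C → Finset α) (hS : ∀ k, (S k).Nonempty)
    (lam : Fin C → ℝ) (hlam : ∀ k, 0 < lam k)
    (ρ : α) (W : ℝ)
    (hW : W = Finset.univ.sup' ⟨⟨0, hC⟩, Finset.mem_univ _⟩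
      (fun k => lam k * minDist d ρ (S k) (hS k))) :
    ∃ k : Fin C, ∃ σ ∈ S k,
      Finset.univ.sup' ⟨⟨0, hC⟩, Finset.mem_univ _⟩
        (fun j => lam j * minDist d σ (S j) (hS j)) ≤ 2 * W := by
  obtain ⟨k, -, hk⟩ := Finset.exists_min_image Finset.univ
    (fun k => minDist d ρ (S k) (hS k)) ⟨⟨0, hC⟩, Finset.mem_univ _⟩
  obtain ⟨σ, hσ, hρσ⟩ := exists_mem_dist_eq_minDist (d := d) ρ (hS k)
  refine ⟨k, σ, hσ, Finset.sup'_le _ _ fun j _ => ?_⟩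
  have hσj : minDist d σ (S j) (hS j) ≤ 2 * minDist d ρ (S j) (hS j) :=
    minDist_le_two_mul_of_dist_le hd_symm hd_tri (hS j) (hρσ ▸ hk j (Finset.mem_univ j))
  have hWj : lam j * minDist d ρ (S j) (hS j) ≤ W :=
    hW ▸ Finset.le_sup' (fun k => lam k * minDist d ρ (S k) (hS k)) (Finset.mem_univ j)
  calc lam j * minDist d σ (S j) (hS j) ≤ lam j * (2 * minDist d ρ (S j) (hS j)) :=
        mul_le_mul_of_nonneg_left hσj (hlam j).le
    _ ≤ 2 * W := by linarith

/-- min-Pick-Perm 2-approximation: there is a ranking in one of the classes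
whose minmax min-distance objective is at most `2W`. -/
theorem exists_min_pick_perm_le_two_W {α : Type*} (d : α → α → ℝ)
    (hd_self : ∀ x, d x x = 0)
    (hd_symm : ∀ x y, d x y = d y x)
    (hd_nonneg : ∀ x y, 0 ≤ d x y)
    (hd_tri : ∀ x y z, d x z ≤ d x y + d y z)
    {C : ℕ} (hC : 0 < C)
    (S : Fin C → Finset α) (hS : ∀ k, (S k).Nonempty)
    (lam : Fin C → ℝ) (hlam : ∀ k, 0 < lam k)
    (ρ : α) (W : ℝ)
    (hW : W = Finset.univ.sup' ⟨⟨0, hC⟩, Finset.mem_univ _⟩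
      (fun k => lam k * minDist d ρ (S k) (hS k))) :
    ∃ k : Fin C, ∃ σ ∈ S k,
      Finset.univ.sup' ⟨⟨0, hC⟩, Finset.mem_univ _⟩
        (fun j => lam j * minDist d σ (S j) (hS j)) ≤ 2 * W :=
  exists_min_pick_perm_le_two_W_general d hd_symm hd_tri hC S hS lam hlam ρ W hW
end

section
/- Let C ≥ 2, let a₁,…,a_C be points of a type α, let d : α → α → ℝ be symmetric and nonnegative, and let λ₁,…,λ_C be positive reals. Then min_{k} max_{j ≠ k} λ_j·d(a_k, a_j) ≤ 2·max_{k ≠ j} (λ_k·λ_j/(λ_k + λ_j))·d(a_k, a_j). -/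
/-! Pick `k` of maximal weight. For every `j ≠ k` we have `λ_j ≤ λ_k`, hence
`λ_j ≤ 2 λ_k λ_j / (λ_k + λ_j)`: twice the harmonic-mean weight of a pair dominates its
smaller weight. So the score of `k` is at most twice the largest weighted pairwise distance. -/

theorem le_two_mul_mul_div_add_of_le {K : Type*} [Field K] [LinearOrder K] [IsStrictOrderedRing K]
    {x y : K} (hx : 0 < x) (hy : 0 ≤ y) (hyx : y ≤ x) :
    y ≤ 2 * (x * y / (x + y)) := by
  rw [mul_div_assoc', le_div_iff₀ (by linarith)]
  nlinarith

/-- Key step of the min-Pick-Perm analysis: for points `a₁,…,a_C` (`C ≥ 2`), a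
symmetric nonnegative `d`, and positive weights,
`min_k max_{j ≠ k} λ_j·d(a_k, a_j)` is at most twice the maximum over ordered
pairs of distinct indices of `(λ_k·λ_j/(λ_k+λ_j))·d(a_k, a_j)`. -/
theorem min_pick_key_step {α : Type*} {C : ℕ} (hC : 2 ≤ C)
    (a : Fin C → α) (d : α → α → ℝ)
    (hd_nonneg : ∀ x y, 0 ≤ d x y)
    (lam : Fin C → ℝ) (hlam : ∀ k, 0 < lam k) :
    Finset.univ.inf' ⟨⟨0, by omega⟩, Finset.mem_univ _⟩
      (fun k => (Finset.univ.erase k).sup'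
        (by
          rw [← Finset.card_pos, Finset.card_erase_of_mem (Finset.mem_univ _),
            Finset.card_univ, Fintype.card_fin]
          omega)
        (fun j => lam j * d (a k) (a j))) ≤
    2 * ((Finset.univ ×ˢ Finset.univ).filter
        (fun p : Fin C × Fin C => p.1 ≠ p.2)).sup'
      ⟨(⟨0, by omega⟩, ⟨1, by omega⟩), by
        simp [Finset.mem_filter, Fin.ext_iff]⟩
      (fun p => (lam p.1 * lam p.2 / (lam p.1 + lam p.2)) * d (a p.1) (a p.2)) := by
  obtain ⟨k, -, hk⟩ := Finset.exists_max_image Finset.univ lam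
    ⟨⟨0, by omega⟩, Finset.mem_univ _⟩
  refine (Finset.inf'_le _ (Finset.mem_univ k)).trans (Finset.sup'_le _ _ fun j hj => ?_)
  have hkj : (k, j) ∈ (Finset.univ ×ˢ Finset.univ).filter
      (fun p : Fin C × Fin C => p.1 ≠ p.2) := by
    simpa [eq_comm] using Finset.ne_of_mem_erase hj
  calc lam j * d (a k) (a j)
      ≤ 2 * (lam k * lam j / (lam k + lam j)) * d (a k) (a j) :=
        mul_le_mul_of_nonneg_right
          (le_two_mul_mul_div_add_of_le (hlam k) (hlam j).le (hk j (Finset.mem_univ j)))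
          (hd_nonneg _ _)
    _ ≤ _ := by
        rw [mul_assoc]
        gcongr
        exact Finset.le_sup' (fun p : Fin C × Fin C =>
          lam p.1 * lam p.2 / (lam p.1 + lam p.2) * d (a p.1) (a p.2)) hkj
end

section
/- Let d be a pseudometric on a type α, let Σ¹,…,Σ^C (C ≥ 1) be nonempty finite subsets of α with positive weights λ₁,…,λ_C, let W ≥ 0, let k* ∈ {1,…,C} and σ* ∈ Σ^{k*} satisfy max_j λ_j·d_min(σ*, Σ^j) ≤ 2W. For each j choose σ_j ∈ Σ^j with d(σ*, σ_j) = d_min(σ*, Σ^j) and σ_{k*} = σ*. Let c ≥ 0 and suppose π' ∈ α is a c-approximate minimizer of the surrogate objective, i.e., for every π ∈ α, max_j λ_j·d(π', σ_j) ≤ c·max_j λ_j·d(π, σ_j). Then max_j λ_j·d_min(π', Σ^j) ≤ 2cW. -/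
theorem minDist_le_of_mem {α : Type*} (d : α → α → ℝ) (π : α) {T : Finset α}
    (hT : T.Nonempty) {σ : α} (hσ : σ ∈ T) : minDist d π T hT ≤ d π σ :=
  Finset.inf'_le _ hσ

theorem sup'_mul_minDist_le_sup'_mul_dist {α ι : Type*} (d : α → α → ℝ) (π : α)
    {s : Finset ι} (hs : s.Nonempty) (S : ι → Finset α) (hS : ∀ j, (S j).Nonempty)
    {lam : ι → ℝ} (hlam : ∀ j, 0 ≤ lam j) {σ : ι → α} (hσ : ∀ j, σ j ∈ S j) :
    s.sup' hs (fun j => lam j * minDist d π (S j) (hS j)) ≤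
      s.sup' hs (fun j => lam j * d π (σ j)) :=
  Finset.sup'_mono_fun fun j _ =>
    mul_le_mul_of_nonneg_left (minDist_le_of_mem d π (hS j) (hσ j)) (hlam j)

theorem min_pick_then_approx_general {α : Type*} (d : α → α → ℝ)
    {C : ℕ} (hC : 0 < C)
    (S : Fin C → Finset α) (hS : ∀ k, (S k).Nonempty)
    (lam : Fin C → ℝ) (hlam : ∀ k, 0 < lam k)
    (W : ℝ)
    (σstar : α)
    (hσstar : Finset.univ.sup' ⟨⟨0, hC⟩, Finset.mem_univ _⟩
      (fun j => lam j * minDist d σstar (S j) (hS j)) ≤ 2 * W)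
    (σ : Fin C → α) (hσ_mem : ∀ j, σ j ∈ S j)
    (hσ_min : ∀ j, d σstar (σ j) = minDist d σstar (S j) (hS j))
    (c : ℝ) (hc : 0 ≤ c) (π' : α)
    (happrox : ∀ π : α,
      Finset.univ.sup' ⟨⟨0, hC⟩, Finset.mem_univ _⟩
        (fun j => lam j * d π' (σ j)) ≤
      c * Finset.univ.sup' ⟨⟨0, hC⟩, Finset.mem_univ _⟩
        (fun j => lam j * d π (σ j))) :
    Finset.univ.sup' ⟨⟨0, hC⟩, Finset.mem_univ _⟩
      (fun j => lam j * minDist d π' (S j) (hS j)) ≤ 2 * c * W := by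
  have hσstar_surrogate : Finset.univ.sup' ⟨⟨0, hC⟩, Finset.mem_univ _⟩
      (fun j => lam j * d σstar (σ j)) ≤ 2 * W := by
    simpa only [hσ_min] using hσstar
  calc _ ≤ Finset.univ.sup' ⟨⟨0, hC⟩, Finset.mem_univ _⟩ (fun j => lam j * d π' (σ j)) :=
        sup'_mul_minDist_le_sup'_mul_dist d π' _ S hS (fun j => (hlam j).le) hσ_mem
    _ ≤ c * Finset.univ.sup' ⟨⟨0, hC⟩, Finset.mem_univ _⟩ (fun j => lam j * d σstar (σ j)) :=
        happrox σstar
    _ ≤ c * (2 * W) := mul_le_mul_of_nonneg_left hσstar_surrogate hc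
    _ = 2 * c * W := by ring

/-- Applying a `c`-approximation algorithm for the median minmax problem to the
representatives `σ_j` selected by min-Pick-Perm yields a `2c`-approximation for
the min-distance minmax problem. -/
theorem min_pick_then_approx {α : Type*} (d : α → α → ℝ)
    (hd_self : ∀ x, d x x = 0)
    (hd_symm : ∀ x y, d x y = d y x)
    (hd_nonneg : ∀ x y, 0 ≤ d x y)
    (hd_tri : ∀ x y z, d x z ≤ d x y + d y z)
    {C : ℕ} (hC : 0 < C)
    (S : Fin C → Finset α) (hS : ∀ k, (S k).Nonempty)
    (lam : Fin C → ℝ) (hlam : ∀ k, 0 < lam k)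
    (W : ℝ) (hW : 0 ≤ W)
    (kstar : Fin C) (σstar : α) (hσstar_mem : σstar ∈ S kstar)
    (hσstar : Finset.univ.sup' ⟨⟨0, hC⟩, Finset.mem_univ _⟩
      (fun j => lam j * minDist d σstar (S j) (hS j)) ≤ 2 * W)
    (σ : Fin C → α) (hσ_mem : ∀ j, σ j ∈ S j)
    (hσ_min : ∀ j, d σstar (σ j) = minDist d σstar (S j) (hS j))
    (hσ_kstar : σ kstar = σstar)
    (c : ℝ) (hc : 0 ≤ c) (π' : α)
    (happrox : ∀ π : α,
      Finset.univ.sup' ⟨⟨0, hC⟩, Finset.mem_univ _⟩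
        (fun j => lam j * d π' (σ j)) ≤
      c * Finset.univ.sup' ⟨⟨0, hC⟩, Finset.mem_univ _⟩
        (fun j => lam j * d π (σ j))) :
    Finset.univ.sup' ⟨⟨0, hC⟩, Finset.mem_univ _⟩
      (fun j => lam j * minDist d π' (S j) (hS j)) ≤ 2 * c * W :=
  min_pick_then_approx_general d hC S hS lam hlam W σstar hσstar σ hσ_mem hσ_min c hc π' happrox
end
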